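/- Let m ≥ 2 and let the words z_n be defined as in the closed z-factorization of the m-bonacci word. For every n ≥ 0, the concatenation P_n = z_0 z_1 ⋯ z_{n-1} is a prefix of the infinite m-bonacci word h_ω; consequently h_ω = z_0 z_1 z_2 ⋯. -/

import Mathlib

/-- The `m`-bonacci morphism on letters: `i ↦ 0(i+1)` for `i ≤ m-2`, `(m-1) ↦ 0`. -/
def phi (m a : ℕ) : List ℕ := if a = m - 1 then [0] else [0, a + 1]

/-- The `m`-bonacci morphism on words. -/
def phiW (m : ℕ) (w : List ℕ) : List ℕ := w.flatMap (phi m)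

/-- The finite `m`-bonacci words `h_n = φ_m^n(0)`. -/
def hb (m : ℕ) : ℕ → List ℕ
  | 0 => [0]
  | n+1 => phiW m (hb m n)

/-- The palindromic prefixes of the `m`-bonacci word, shifted:
`ub m n` is the paper's `u_{n+1}` (so `ub m 0 = u₁ = ε`, and `u_{n+2} = h_n u_{n+1}`). -/
def ub (m : ℕ) : ℕ → List ℕ
  | 0 => []
  | n+1 => hb m n ++ ub m n

/-- Number of occurrences of `x` as a factor of `w` (counted by starting position). -/
def occ (x w : List ℕ) : ℕ :=
  ((List.range (w.length + 1)).filter (fun i => x.isPrefixOf (w.drop i))).length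

/-- A word is closed if it is a single letter or has a border (a proper factor that
is both a prefix and a suffix) occurring exactly twice in it. -/
def ClosedWord (w : List ℕ) : Prop :=
  w.length = 1 ∨
    ∃ x : List ℕ, x ≠ [] ∧ x.length < w.length ∧ x <+: w ∧ x <:+ w ∧ occ x w = 2

/-- The words `z_n` of the closed `z`-factorization of the `m`-bonacci word:
`z₀ = 0`, `z₁ = 1`, `z₂ = 020` (`00` when `m = 2`),
`z_n = (n-3 mod m)⁻¹ h_{n-3}^R h_{n-2}^R (n) h₀^R ⋯ h_{n-3}^R (n-2)` for `3 ≤ n ≤ m-1`, and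
`z_n = (n-3 mod m)⁻¹ h_{n-3}^R h_{n-2}^R h_{n-m}^R h_{n-m+1}^R ⋯ h_{n-3}^R (n-2 mod m)` for `n ≥ m`
(removing the first letter of `h_{n-3}^R`, which is `n-3 mod m` when `m ∤ n-3` and `0` otherwise). -/
def zb (m : ℕ) : ℕ → List ℕ
  | 0 => [0]
  | 1 => [1]
  | 2 => if m = 2 then [0, 0] else [0, 2, 0]
  | n+3 =>
    if m ≤ n + 3 then
      ((hb m n).reverse).tail ++ (hb m (n + 1)).reverse ++
        (((List.range (m - 2)).map (fun j => (hb m (n + 3 - m + j)).reverse)).flatten) ++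
        [(n + 1) % m]
    else
      ((hb m n).reverse).tail ++ (hb m (n + 1)).reverse ++ [n + 3] ++
        (((List.range (n + 1)).map (fun j => (hb m j).reverse)).flatten) ++ [n + 1]

/-- The concatenation `P_n = z₀ z₁ ⋯ z_{n-1}`. -/
def Pm (m n : ℕ) : List ℕ := ((List.range n).map (zb m)).flatten

def hatL (m k : ℕ) : List ℕ := if m ∣ k then [0] else []

lemma phiW_nil (m : ℕ) : phiW m [] = [] := rfl
lemma phiW_cons (m a : ℕ) (w : List ℕ) : phiW m (a :: w) = phi m a ++ phiW m w := rfl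
lemma phiW_append (m : ℕ) (u v : List ℕ) : phiW m (u ++ v) = phiW m u ++ phiW m v := by
  simp [phiW]

lemma phi_zero {m : ℕ} (hm : 2 ≤ m) : phi m 0 = [0, 1] := by
  unfold phi; rw [if_neg]; omega

lemma phi_cons_zero (m a : ℕ) : ∃ s, phi m a = 0 :: s := by
  unfold phi; split <;> exact ⟨_, rfl⟩

lemma phi_rev (m a : ℕ) : phi m a ++ [0] = 0 :: (phi m a).reverse := by
  unfold phi; split <;> simp

lemma phiW_rev (m : ℕ) (w : List ℕ) :
    phiW m w.reverse ++ [0] = 0 :: (phiW m w).reverse := by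
  induction w with
  | nil => rfl
  | cons a t ih =>
    rw [List.reverse_cons, phiW_append, phiW_cons, phiW_nil, List.append_nil,
      List.append_assoc, phi_rev]
    rw [show phiW m t.reverse ++ (0 :: (phi m a).reverse)
        = (phiW m t.reverse ++ [0]) ++ (phi m a).reverse by simp]
    rw [ih, phiW_cons]
    simp

lemma hb_rev_step (m k : ℕ) :
    phiW m (hb m k).reverse ++ [0] = 0 :: (hb m (k+1)).reverse := by
  rw [phiW_rev]; rfl

lemma hb_head {m : ℕ} (hm : 2 ≤ m) (k : ℕ) : ∃ t, hb m k = 0 :: t := by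
  induction k with
  | zero => exact ⟨[], rfl⟩
  | succ n ih =>
    obtain ⟨t, ht⟩ := ih
    refine ⟨1 :: phiW m t, ?_⟩
    show phiW m (hb m n) = _
    rw [ht, phiW_cons, phi_zero hm]; rfl

lemma mod_succ {m : ℕ} (hm : 2 ≤ m) (k : ℕ) :
    (k + 1) % m = if k % m = m - 1 then 0 else k % m + 1 := by
  have h1 : k % m < m := Nat.mod_lt _ (by omega)
  rw [Nat.add_mod]
  rw [Nat.one_mod_eq_one.mpr (by omega)]
  split
  · rename_i h; rw [h]; rw [show m - 1 + 1 = m by omega, Nat.mod_self]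
  · rename_i h; exact Nat.mod_eq_of_lt (by omega)

lemma hb_last {m : ℕ} (hm : 2 ≤ m) (k : ℕ) : ∃ l, hb m k = l ++ [k % m] := by
  induction k with
  | zero => exact ⟨[], by simp [hb, Nat.zero_mod]⟩
  | succ n ih =>
    obtain ⟨l, hl⟩ := ih
    rw [mod_succ hm]
    show ∃ l', phiW m (hb m n) = _
    rw [hl, phiW_append, phiW_cons, phiW_nil, List.append_nil]
    unfold phi
    split
    · exact ⟨phiW m l, rfl⟩
    · exact ⟨phiW m l ++ [0], by simp⟩

lemma dvd_mod_zero {m k : ℕ} (hm : 2 ≤ m) : m ∣ k ↔ k % m = 0 :=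
  Nat.dvd_iff_mod_eq_zero

lemma mod_pred {m : ℕ} (hm : 2 ≤ m) {k : ℕ} (h : m ∣ k + 1) : k % m = m - 1 := by
  have h' : (k + 1) % m = 0 := (dvd_mod_zero hm).mp h
  by_contra hc
  rw [mod_succ hm, if_neg hc] at h'
  omega

lemma mod_pred' {m : ℕ} (hm : 2 ≤ m) {k : ℕ} (h : ¬ m ∣ k + 1) : k % m ≠ m - 1 := by
  intro hc
  rw [dvd_mod_zero hm, mod_succ hm, if_pos hc] at h
  exact h rfl

/-- (δ) -/
lemma phi_hat {m : ℕ} (hm : 2 ≤ m) (k : ℕ) :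
    phi m (k % m) ++ hatL m (k+1) = 0 :: [(k+1) % m] := by
  by_cases h : m ∣ k + 1
  · have h1 := mod_pred hm h
    have h2 : (k+1) % m = 0 := (dvd_mod_zero hm).mp h
    rw [h1, h2]; unfold phi hatL
    rw [if_pos rfl, if_pos h]; rfl
  · have h1 := mod_pred' hm h
    have h2 : (k+1) % m = k % m + 1 := by rw [mod_succ hm, if_neg h1]
    rw [h2]; unfold phi hatL
    rw [if_neg h1, if_neg h]; rfl

/-- (α) -/
lemma phiW_tail {m : ℕ} (hm : 2 ≤ m) (k : ℕ) :
    phiW m ((hb m k).reverse.tail) ++ [0]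
      = hatL m (k+1) ++ (hb m (k+1)).reverse.tail := by
  obtain ⟨l, hl⟩ := hb_last hm k
  obtain ⟨l', hl'⟩ := hb_last hm (k+1)
  have key := hb_rev_step m k
  rw [hl, hl'] at key ⊢
  simp only [List.reverse_append, List.reverse_singleton, List.singleton_append,
    List.tail_cons] at key ⊢
  rw [phiW_cons] at key
  by_cases h : m ∣ k + 1
  · have h1 := mod_pred hm h
    have h2 : (k+1) % m = 0 := (dvd_mod_zero hm).mp h
    rw [h1, h2] at key
    unfold phi at key
    rw [if_pos rfl] at key
    simp only [List.singleton_append, List.cons_append] at key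
    unfold hatL; rw [if_pos h]
    have := List.cons.injEq 0 (phiW m l.reverse ++ [0]) 0 (0 :: l'.reverse) ▸ key
    simpa using key
  · have h1 := mod_pred' hm h
    have h2 : (k+1) % m = k % m + 1 := by rw [mod_succ hm, if_neg h1]
    rw [h2] at key
    unfold phi at key
    rw [if_neg h1] at key
    simp only [List.cons_append, List.nil_append] at key
    unfold hatL; rw [if_neg h]
    simpa using key

/-- (γ) telescoping -/
lemma phiW_join {m : ℕ} (c : ℕ) (f : ℕ → ℕ) :
    phiW m (((List.range c).map (fun j => (hb m (f j)).reverse)).flatten) ++ [0]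
      = 0 :: ((List.range c).map (fun j => (hb m (f j + 1)).reverse)).flatten := by
  induction c with
  | zero => simp [phiW]
  | succ n ih =>
    rw [List.range_succ]
    simp only [List.map_append, List.map_cons, List.map_nil, List.flatten_append,
      List.flatten_cons, List.flatten_nil, List.append_nil]
    rw [phiW_append, List.append_assoc, hb_rev_step]
    rw [show ∀ (x : List ℕ), x ++ (0 :: (hb m (f n + 1)).reverse)
        = (x ++ [0]) ++ (hb m (f n + 1)).reverse from fun x => by simp]
    rw [ih]
    simp

/-- chaining helper -/
lemma step_eq {a b : List ℕ} (h : a ++ [0] = b) (c : List ℕ) :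
    a ++ (0 :: c) = b ++ c := by
  rw [← h]; simp

lemma phiW_singleton (m a : ℕ) : phiW m [a] = phi m a := by simp [phiW]

lemma join_shift (m c : ℕ) :
    0 :: ((List.range c).map (fun j => (hb m (j+1)).reverse)).flatten
      = ((List.range (c+1)).map (fun j => (hb m j).reverse)).flatten := by
  rw [List.range_succ_eq_map]
  simp [List.map_map, Function.comp]
  rfl

/-- abstract assembly for branch A → A -/
lemma assembleA {A B C D1 D2 T R J c0 h1 : List ℕ}
    (e1 : A ++ [0] = h1 ++ T) (e2 : B ++ [0] = 0 :: R)
    (e3 : C ++ [0] = 0 :: J) (e5 : D1 ++ D2 = 0 :: c0) :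
    A ++ (B ++ (C ++ (D1 ++ D2))) = h1 ++ (T ++ (R ++ (J ++ c0))) := by
  rw [e5, step_eq e3, List.cons_append, step_eq e2, List.cons_append, step_eq e1]
  simp

/-- abstract assembly for branch B → B -/
lemma assembleBB {A B C T R J h1 : List ℕ} (x : ℕ) {c0 D1 D2 : List ℕ}
    (e1 : A ++ [0] = h1 ++ T) (e2 : B ++ [0] = 0 :: R)
    (e3 : C ++ [0] = 0 :: J) (e5 : D1 ++ D2 = 0 :: c0) :
    A ++ (B ++ ([0, x] ++ (C ++ (D1 ++ D2))))
      = h1 ++ (T ++ (R ++ ([x] ++ ((0 :: J) ++ c0)))) := by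
  rw [e5, step_eq e3]
  rw [show [0, x] ++ ((0 :: J) ++ c0) = 0 :: ([x] ++ ((0 :: J) ++ c0)) by simp]
  rw [step_eq e2, List.cons_append, step_eq e1]
  simp

/-- abstract assembly for branch B → A (transition) -/
lemma assembleBA {A B C T R J h1 : List ℕ} {c0 D1 D2 : List ℕ}
    (e1 : A ++ [0] = h1 ++ T) (e2 : B ++ [0] = 0 :: R)
    (e3 : C ++ [0] = 0 :: J) (e5 : D1 ++ D2 = 0 :: c0) :
    A ++ (B ++ ([0] ++ (C ++ (D1 ++ D2))))
      = h1 ++ (T ++ (R ++ ((0 :: J) ++ c0))) := by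
  rw [e5, step_eq e3]
  rw [show ([0] : List ℕ) ++ ((0 :: J) ++ c0) = 0 :: ((0 :: J) ++ c0) by simp]
  rw [step_eq e2, List.cons_append, step_eq e1]
  simp

lemma Zrec {m : ℕ} (hm : 2 ≤ m) (k : ℕ) :
    hatL m k ++ zb m (k+3) = phiW m (zb m (k+2)) ++ hatL m (k+1) := by
  match k with
  | 0 =>
    match m, hm with
    | 2, _ => decide
    | 3, _ => decide
    | (m+4), _ =>
      have hnd : ¬ (m+4) ∣ 1 := by
        intro h; have := Nat.le_of_dvd (by omega) h; omega
      have h1 : hb (m+4) 1 = [0, 1] := by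
        show phiW (m+4) (hb (m+4) 0) = _
        show phiW (m+4) [0] = _
        rw [phiW_singleton, phi_zero (by omega)]
      simp only [zb, hatL, if_pos (Nat.dvd_zero _), if_neg hnd,
        if_neg (show ¬ (m+4) ≤ 0 + 3 by omega), if_neg (show (m+4) ≠ 2 by omega)]
      show (0 : ℕ) :: ((hb (m+4) 0).reverse.tail ++ (hb (m+4) 1).reverse ++ [3] ++
          ((List.range 1).map (fun j => (hb (m+4) j).reverse)).flatten ++ [1])
        = phiW (m+4) [0, 2, 0] ++ []
      have h2 : phi (m+4) 2 = [0, 3] := by unfold phi; rw [if_neg (by omega)]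
      rw [show phiW (m+4) [0,2,0] = phi (m+4) 0 ++ (phi (m+4) 2 ++ (phi (m+4) 0 ++ [])) from rfl]
      rw [phi_zero (by omega : 2 ≤ m+4), h2, h1]
      show (0 : ℕ) :: (([0].reverse.tail) ++ [1, 0] ++ [3] ++ ([0].reverse ++ []) ++ [1]) = _
      simp
  | (k+1) =>
    have e1 := phiW_tail hm k
    have e2 := hb_rev_step m (k+1)
    have e5 := phi_hat hm (k+1)
    rcases lt_trichotomy m (k+4) with hlt | heq | hgt
    · -- both branch A : m ≤ k+3
      have hA : m ≤ k + 3 := by omega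
      have e3 := phiW_join (m := m) (c := m-2) (fun j => k + 3 - m + j)
      have e4 : (fun j => (hb m (k + 3 - m + j + 1)).reverse)
          = (fun j => (hb m (k + 1 + 3 - m + j)).reverse) := by
        funext j; rw [show k + 3 - m + j + 1 = k + 1 + 3 - m + j by omega]
      rw [e4] at e3
      simp only [zb, if_pos (show m ≤ k + 1 + 3 by omega), if_pos (show m ≤ k + 3 by omega)]
      simp only [phiW_append, phiW_singleton, List.append_assoc]
      exact (assembleA e1 e2 e3 e5).symm
    · -- transition : m = k + 4
      subst heq
      have e3 := phiW_join (m := k+4) (c := k+1) (fun j => j)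
      beta_reduce at e3
      rw [Nat.mod_eq_of_lt (show k+1 < k+4 by omega),
        Nat.mod_eq_of_lt (show k+1+1 < k+4 by omega)] at e5
      simp only [zb, if_pos (show k+4 ≤ k+1+3 by omega), if_neg (show ¬ k+4 ≤ k+3 by omega)]
      rw [show (fun j => (hb (k+4) (k+1+3-(k+4)+j)).reverse)
          = (fun j => (hb (k+4) j).reverse) from funext fun j => by
            rw [show k+1+3-(k+4)+j = j by omega]]
      rw [show k+4-2 = k+1+1 by omega]
      rw [show (k+1+1) % (k+4) = k+1+1 from Nat.mod_eq_of_lt (by omega)]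
      rw [← join_shift]
      simp only [phiW_append, phiW_singleton, List.append_assoc]
      rw [show phi (k+4) (k+3) = [0] from by unfold phi; rw [if_pos (by omega)]]
      exact (assembleBA e1 e2 e3 e5).symm
    · -- both branch B : k + 4 < m
      have e3 := phiW_join (m := m) (c := k+1) (fun j => j)
      beta_reduce at e3
      rw [Nat.mod_eq_of_lt (show k+1 < m by omega),
        Nat.mod_eq_of_lt (show k+1+1 < m by omega)] at e5
      simp only [zb, if_neg (show ¬ m ≤ k+1+3 by omega), if_neg (show ¬ m ≤ k+3 by omega)]
      rw [show k+1+1 = k+2 by omega, show k+1+3 = k+4 by omega]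
      rw [← join_shift]
      simp only [phiW_append, phiW_singleton, List.append_assoc]
      rw [show phi m (k+3) = [0, k+4] from by unfold phi; rw [if_neg (by omega)]]
      exact (assembleBB (k+4) e1 e2 e3 e5).symm

lemma Pm_succ (m n : ℕ) : Pm m (n+1) = Pm m n ++ zb m n := by
  simp [Pm, List.range_succ]

def hatF (m : ℕ) : ℕ → List ℕ
  | 0 => [0]
  | 1 => []
  | n+2 => hatL m n

lemma hatF_prefix (m n : ℕ) : hatF m n <+: [0] := by
  match n with
  | 0 => exact List.prefix_rfl
  | 1 => exact List.nil_prefix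
  | n+2 =>
    show hatL m n <+: [0]
    unfold hatL; split
    · exact List.prefix_rfl
    · exact List.nil_prefix

lemma z2_eq {m : ℕ} (hm : 2 ≤ m) : zb m 2 = phi m 1 ++ [0] := by
  show (if m = 2 then [0, 0] else [0, 2, 0]) = (if 1 = m - 1 then [0] else [0, 1 + 1]) ++ [0]
  by_cases h : m = 2
  · subst h; simp
  · rw [if_neg h, if_neg (show ¬ (1 = m - 1) by omega)]; rfl

lemma z_step {m : ℕ} (hm : 2 ≤ m) (n : ℕ) :
    hatF m n ++ zb m (n+1) = phiW m (zb m n) ++ hatF m (n+1) := by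
  match n with
  | 0 => show [0] ++ [1] = phiW m [0] ++ [] ; rw [phiW_singleton, phi_zero hm]; rfl
  | 1 =>
    show [] ++ zb m 2 = phiW m [1] ++ hatL m 0
    rw [phiW_singleton, List.nil_append, z2_eq hm]
    unfold hatL; rw [if_pos (Nat.dvd_zero m)]
  | n+2 =>
    show hatL m n ++ zb m (n+3) = phiW m (zb m (n+2)) ++ hatL m (n+1)
    exact Zrec hm n

lemma Pm_rec {m : ℕ} (hm : 2 ≤ m) (n : ℕ) :
    Pm m (n+1) = phiW m (Pm m n) ++ hatF m n := by
  induction n with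
  | zero => rfl
  | succ n ih =>
    calc Pm m (n+1+1) = (phiW m (Pm m n) ++ hatF m n) ++ zb m (n+1) := by rw [Pm_succ, ih]
      _ = phiW m (Pm m n) ++ (hatF m n ++ zb m (n+1)) := by simp
      _ = phiW m (Pm m n) ++ (phiW m (zb m n) ++ hatF m (n+1)) := by rw [z_step hm n]
      _ = phiW m (Pm m n ++ zb m n) ++ hatF m (n+1) := by rw [phiW_append]; simp
      _ = phiW m (Pm m (n+1)) ++ hatF m (n+1) := by rw [← Pm_succ]

lemma phiW_length_le (m : ℕ) (w : List ℕ) : w.length ≤ (phiW m w).length := by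
  induction w with
  | nil => simp [phiW]
  | cons a t ih =>
    rw [phiW_cons, List.length_append, List.length_cons]
    have : 1 ≤ (phi m a).length := by unfold phi; split <;> simp
    omega

lemma hb_length_lt {m : ℕ} (hm : 2 ≤ m) (k : ℕ) :
    (hb m k).length < (hb m (k+1)).length := by
  obtain ⟨t, ht⟩ := hb_head hm k
  have : hb m (k+1) = [0, 1] ++ phiW m t := by
    show phiW m (hb m k) = _
    rw [ht, phiW_cons, phi_zero hm]
  rw [ht, this]
  have h2 := phiW_length_le m t
  simp only [List.length_append, List.length_cons, List.length_nil]
  omega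

lemma hb_length_ge {m : ℕ} (hm : 2 ≤ m) (k : ℕ) : k + 1 ≤ (hb m k).length := by
  induction k with
  | zero => simp [hb]
  | succ n ih => have := hb_length_lt hm n; omega

lemma hb_prefix_succ {m : ℕ} (hm : 2 ≤ m) (k : ℕ) : hb m k <+: hb m (k+1) := by
  induction k with
  | zero =>
    obtain ⟨t, ht⟩ := hb_head hm 1
    exact ⟨t, by rw [ht]; rfl⟩
  | succ n ih =>
    obtain ⟨t, ht⟩ := ih
    refine ⟨phiW m t, ?_⟩
    show hb m (n+1) ++ phiW m t = phiW m (hb m (n+1))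
    conv_rhs => rw [← ht]
    rw [phiW_append]
    rfl

lemma hb_prefix_le {m : ℕ} (hm : 2 ≤ m) {j k : ℕ} (h : j ≤ k) :
    hb m j <+: hb m k := by
  induction k with
  | zero => rw [Nat.le_zero] at h; subst h; exact List.prefix_rfl
  | succ n ih =>
    rcases Nat.lt_or_ge j (n+1) with h' | h'
    · exact (ih (by omega)).trans (hb_prefix_succ hm n)
    · rw [show j = n+1 by omega]

lemma Pm_main {m : ℕ} (hm : 2 ≤ m) (n : ℕ) :
    ∃ k, Pm m n <+: hb m k ∧ (Pm m n).length < (hb m k).length := by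
  induction n with
  | zero => exact ⟨0, ⟨[0], rfl⟩, by simp [Pm, hb]⟩
  | succ n ih =>
    obtain ⟨k, ⟨t, ht⟩, hlt⟩ := ih
    have htne : t ≠ [] := by
      intro h; rw [h, List.append_nil] at ht; rw [ht] at hlt; omega
    obtain ⟨a, t', rfl⟩ := List.exists_cons_of_ne_nil htne
    obtain ⟨s, hs⟩ := phi_cons_zero m a
    have hpre : phiW m (Pm m n) ++ [0] <+: hb m (k+1) := by
      refine ⟨s ++ phiW m t', ?_⟩
      show _ = phiW m (hb m k)
      rw [← ht, phiW_append, phiW_cons, hs]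
      simp
    obtain ⟨u, hu⟩ := hatF_prefix m n
    have hpre2 : Pm m (n+1) <+: phiW m (Pm m n) ++ [0] := by
      rw [Pm_rec hm, ← hu]
      exact ⟨u, by simp⟩
    have hfull : Pm m (n+1) <+: hb m (k+1) := hpre2.trans hpre
    set K := max (k+1) (Pm m (n+1)).length with hK
    refine ⟨K, hfull.trans (hb_prefix_le hm (le_max_left _ _)), ?_⟩
    have h1 := hb_length_ge hm K
    have h2 : (Pm m (n+1)).length ≤ K := le_max_right _ _
    omega

lemma zb_len_pos (m i : ℕ) : 1 ≤ (zb m i).length := by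
  unfold zb
  split <;> (try split) <;> simp <;> omega

lemma Pm_len (m : ℕ) (n : ℕ) : n ≤ (Pm m n).length := by
  induction n with
  | zero => simp
  | succ n ih =>
    rw [Pm_succ, List.length_append]
    have := zb_len_pos m n
    omega

/-- for `m ≥ 2`, every `P_n = z₀ z₁ ⋯ z_{n-1}` is a prefix of the
infinite `m`-bonacci word `h_ω` (i.e. a prefix of some finite `m`-bonacci word `h_k`,
these being nested prefixes of `h_ω`); since moreover `|P_n| → ∞`, consequently
`h_ω = z₀ z₁ z₂ ⋯`. -/
theorem Pm_prefix :
    ∀ m : ℕ, 2 ≤ m →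
      (∀ n : ℕ, ∃ k : ℕ, Pm m n <+: hb m k) ∧
      (∀ N : ℕ, ∃ n : ℕ, N ≤ (Pm m n).length) := by
  intro m hm
  constructor
  · intro n
    obtain ⟨k, h, -⟩ := Pm_main hm n
    exact ⟨k, h⟩
  · intro N
    exact ⟨N, Pm_len m N⟩
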